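/- Conversion preserves type shape for Π-types, relevant arrows, intersections and unions: (1) if Π x:σ.τ =_Δ ρ then ρ ≡ Π x:σ'.τ' with σ' =_Δ σ and τ' =_Δ τ; (2) if σ →ʳ τ =_Δ ρ then ρ ≡ σ' →ʳ τ' with σ' =_Δ σ and τ' =_Δ τ; (3) if σ ∩ τ =_Δ ρ then ρ ≡ σ' ∩ τ' with σ' =_Δ σ and τ' =_Δ τ; (4) if σ ∪ τ =_Δ ρ then ρ ≡ σ' ∪ τ' with σ' =_Δ σ and τ' =_Δ τ. -/

import Mathlib

set_option autoImplicit false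

namespace LFDelta

/-- Equivalence closure of a relation (conversion). -/
inductive Conv {α : Type} (r : α → α → Prop) : α → α → Prop
| rel {a b : α} : r a b → Conv r a b
| refl (a : α) : Conv r a a
| symm {a b : α} : Conv r a b → Conv r b a
| trans {a b c : α} : Conv r a b → Conv r b c → Conv r a c

/-- Types of the intersection-union type assignment system B
    (with ⊤, used only for the extended system B⁺). -/
inductive BTy : Type
| atom (a : ℕ)
| top
| arr (σ τ : BTy)
| inter (σ τ : BTy)
| union (σ τ : BTy)
deriving DecidableEq

/-- ω-free types of system B. -/
def BTy.OmegaFree : BTy → Prop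
| .atom _ => True
| .top => False
| .arr σ τ => σ.OmegaFree ∧ τ.OmegaFree
| .inter σ τ => σ.OmegaFree ∧ τ.OmegaFree
| .union σ τ => σ.OmegaFree ∧ τ.OmegaFree

/-- Untyped λ-terms (de Bruijn), possibly containing constants
    (the constants c, c_× and c_{|σ|} are used for translations). -/
inductive Lam : Type
| var (n : ℕ)
| app (M N : Lam)
| lam (M : Lam)
| const (c : ℕ)
| cx
| cty (σ : BTy)
deriving DecidableEq

namespace Lam

/-- Pure λ-terms: no constants. -/
def Pure : Lam → Prop
| .var _ => True
| .app M N => Pure M ∧ Pure N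
| .lam M => Pure M
| _ => False

/-- Lift (shift) free variables ≥ c by one. -/
def lift (c : ℕ) : Lam → Lam
| .var n => if n < c then .var n else .var (n+1)
| .app M N => .app (lift c M) (lift c N)
| .lam M => .lam (lift (c+1) M)
| .const k => .const k
| .cx => .cx
| .cty σ => .cty σ

/-- Substitute N for variable k. -/
def subst (k : ℕ) (N : Lam) : Lam → Lam
| .var n => if n < k then .var n else if n = k then (lift 0)^[k] N else .var (n-1)
| .app M₁ M₂ => .app (subst k N M₁) (subst k N M₂)
| .lam M => .lam (subst (k+1) N M)
| .const c => .const c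
| .cx => .cx
| .cty σ => .cty σ

/-- One-step β-reduction. -/
inductive StepB : Lam → Lam → Prop
| beta {M N : Lam} : StepB (.app (.lam M) N) (subst 0 N M)
| appL {M M' N : Lam} : StepB M M' → StepB (.app M N) (.app M' N)
| appR {M N N' : Lam} : StepB N N' → StepB (.app M N) (.app M N')
| lam {M M' : Lam} : StepB M M' → StepB (.lam M) (.lam M')

/-- One-step η-reduction. -/
inductive StepE : Lam → Lam → Prop
| eta {M : Lam} : StepE (.lam (.app (lift 0 M) (.var 0))) M
| appL {M M' N : Lam} : StepE M M' → StepE (.app M N) (.app M' N)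
| appR {M N N' : Lam} : StepE N N' → StepE (.app M N) (.app M N')
| lam {M M' : Lam} : StepE M M' → StepE (.lam M) (.lam M')

/-- β-convertibility. -/
def BetaEq : Lam → Lam → Prop := Conv StepB

/-- βη-convertibility. -/
def BetaEtaEq : Lam → Lam → Prop := Conv (fun a b => StepB a b ∨ StepE a b)

/-- Strong β-normalization. -/
def SNBeta (M : Lam) : Prop := Acc (fun a b => StepB b a) M

end Lam

/-- The subtype theory Ξ of system B without the ω-axioms (5) and (13),
    i.e. axioms/rules (1)-(4), (6)-(12), (14). -/
inductive SubB : BTy → BTy → Prop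
| idemInter {σ : BTy} : SubB σ (.inter σ σ)                                  -- (1)
| idemUnion {σ : BTy} : SubB (.union σ σ) σ                                  -- (2)
| interL {σ τ : BTy} : SubB (.inter σ τ) σ                                   -- (3)
| interR {σ τ : BTy} : SubB (.inter σ τ) τ                                   -- (3)
| unionL {σ τ : BTy} : SubB σ (.union σ τ)                                   -- (4)
| unionR {σ τ : BTy} : SubB τ (.union σ τ)                                   -- (4)
| refl {σ : BTy} : SubB σ σ                                                  -- (6)
| monoInter {σ₁ σ₂ τ₁ τ₂ : BTy} :
    SubB σ₁ σ₂ → SubB τ₁ τ₂ → SubB (.inter σ₁ τ₁) (.inter σ₂ τ₂)             -- (7)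
| monoUnion {σ₁ σ₂ τ₁ τ₂ : BTy} :
    SubB σ₁ σ₂ → SubB τ₁ τ₂ → SubB (.union σ₁ τ₁) (.union σ₂ τ₂)             -- (8)
| trans {σ τ ρ : BTy} : SubB σ τ → SubB τ ρ → SubB σ ρ                        -- (9)
| dist {σ τ ρ : BTy} :
    SubB (.inter σ (.union τ ρ)) (.union (.inter σ τ) (.inter σ ρ))          -- (10)
| arrInter {σ τ ρ : BTy} :
    SubB (.inter (.arr σ τ) (.arr σ ρ)) (.arr σ (.inter τ ρ))                -- (11)
| arrUnion {σ τ ρ : BTy} :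
    SubB (.inter (.arr σ ρ) (.arr τ ρ)) (.arr (.union σ τ) ρ)                -- (12)
| arrow {σ₁ σ₂ τ₁ τ₂ : BTy} :
    SubB σ₂ σ₁ → SubB τ₁ τ₂ → SubB (.arr σ₁ τ₁) (.arr σ₂ τ₂)                  -- (14)

/-- The subtype theory Ξ' (Ξ without (5), (10), (13)), parametrized by
    additional axioms `ax`. -/
inductive Xi' (ax : BTy → BTy → Prop) : BTy → BTy → Prop
| ax {σ τ : BTy} : ax σ τ → Xi' ax σ τ
| idemInter {σ : BTy} : Xi' ax σ (.inter σ σ)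
| idemUnion {σ : BTy} : Xi' ax (.union σ σ) σ
| interL {σ τ : BTy} : Xi' ax (.inter σ τ) σ
| interR {σ τ : BTy} : Xi' ax (.inter σ τ) τ
| unionL {σ τ : BTy} : Xi' ax σ (.union σ τ)
| unionR {σ τ : BTy} : Xi' ax τ (.union σ τ)
| refl {σ : BTy} : Xi' ax σ σ
| monoInter {σ₁ σ₂ τ₁ τ₂ : BTy} :
    Xi' ax σ₁ σ₂ → Xi' ax τ₁ τ₂ → Xi' ax (.inter σ₁ τ₁) (.inter σ₂ τ₂)
| monoUnion {σ₁ σ₂ τ₁ τ₂ : BTy} :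
    Xi' ax σ₁ σ₂ → Xi' ax τ₁ τ₂ → Xi' ax (.union σ₁ τ₁) (.union σ₂ τ₂)
| trans {σ τ ρ : BTy} : Xi' ax σ τ → Xi' ax τ ρ → Xi' ax σ ρ
| arrInter {σ τ ρ : BTy} :
    Xi' ax (.inter (.arr σ τ) (.arr σ ρ)) (.arr σ (.inter τ ρ))
| arrUnion {σ τ ρ : BTy} :
    Xi' ax (.inter (.arr σ ρ) (.arr τ ρ)) (.arr (.union σ τ) ρ)
| arrow {σ₁ σ₂ τ₁ τ₂ : BTy} :
    Xi' ax σ₂ σ₁ → Xi' ax τ₁ τ₂ → Xi' ax (.arr σ₁ τ₁) (.arr σ₂ τ₂)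

/-- Type assignment of system B (Curry style), extended with constant
    typing axioms `ξ` and the constants c_× and c_{|σ|} of B⁺.
    With `ξ := fun _ _ => False` and on pure terms this is exactly system B
    without ω. -/
inductive BPlus (ξ : ℕ → BTy → Prop) : List BTy → Lam → BTy → Prop
| var {Γ : List BTy} {n : ℕ} {σ : BTy} :
    Γ[n]? = some σ → BPlus ξ Γ (.var n) σ
| const {Γ : List BTy} {c : ℕ} {σ : BTy} : ξ c σ → BPlus ξ Γ (.const c) σ
| cx {Γ : List BTy} : BPlus ξ Γ .cx (.arr .top (.arr .top .top))
| cty {Γ : List BTy} {σ : BTy} :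
    BPlus ξ Γ (.cty σ) (.arr .top (.arr (.arr σ .top) .top))
| abs {Γ : List BTy} {M : Lam} {σ τ : BTy} :
    BPlus ξ (σ :: Γ) M τ → BPlus ξ Γ (.lam M) (.arr σ τ)
| app {Γ : List BTy} {M N : Lam} {σ τ : BTy} :
    BPlus ξ Γ M (.arr σ τ) → BPlus ξ Γ N σ → BPlus ξ Γ (.app M N) τ
| interI {Γ : List BTy} {M : Lam} {σ τ : BTy} :
    BPlus ξ Γ M σ → BPlus ξ Γ M τ → BPlus ξ Γ M (.inter σ τ)
| interEl {Γ : List BTy} {M : Lam} {σ τ : BTy} :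
    BPlus ξ Γ M (.inter σ τ) → BPlus ξ Γ M σ
| interEr {Γ : List BTy} {M : Lam} {σ τ : BTy} :
    BPlus ξ Γ M (.inter σ τ) → BPlus ξ Γ M τ
| unionIl {Γ : List BTy} {M : Lam} {σ τ : BTy} :
    BPlus ξ Γ M σ → BPlus ξ Γ M (.union σ τ)
| unionIr {Γ : List BTy} {M : Lam} {σ τ : BTy} :
    BPlus ξ Γ M τ → BPlus ξ Γ M (.union σ τ)
| unionE {Γ : List BTy} {M N : Lam} {σ τ ρ : BTy} :
    BPlus ξ (σ :: Γ) M ρ → BPlus ξ (τ :: Γ) M ρ → BPlus ξ Γ N (.union σ τ) →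
    BPlus ξ Γ (Lam.subst 0 N M) ρ
| sub {Γ : List BTy} {M : Lam} {σ τ : BTy} :
    BPlus ξ Γ M σ → SubB σ τ → BPlus ξ Γ M τ

/-- The pseudo-terms of LF_Δ: kinds, families and objects in a single syntax
    (the typing judgments single out each syntactic class). -/
inductive Tm : Type
| type                        -- the kind Type
| pi (σ τ : Tm)               -- Πx:σ.K and Πx:σ.τ
| rarr (σ τ : Tm)             -- relevant family σ →ʳ τ
| inter (σ τ : Tm)            -- intersection family
| union (σ τ : Tm)            -- union family
| const (c : ℕ)               -- constants (family- and object-level)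
| var (n : ℕ)                 -- variables (de Bruijn)
| lam (σ Δ : Tm)              -- λx:σ.Δ
| app (Δ₁ Δ₂ : Tm)            -- application (of families and of objects)
| rlam (σ Δ : Tm)             -- relevant abstraction λʳx:σ.Δ
| rapp (Δ₁ Δ₂ : Tm)           -- relevant application
| pair (Δ₁ Δ₂ : Tm)           -- strong pair ⟨Δ₁,Δ₂⟩
| copair (Δ₁ Δ₂ : Tm)         -- strong co-pair [Δ₁,Δ₂]
| prl (Δ : Tm)                -- left projection
| prr (Δ : Tm)                -- right projection
| inl (σ Δ : Tm)              -- injection in_l^σ Δ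
| inr (σ Δ : Tm)              -- injection in_r^σ Δ
deriving DecidableEq

namespace Tm

/-- Lift free variables ≥ c by one. -/
def lift (c : ℕ) : Tm → Tm
| .type => .type
| .pi σ τ => .pi (lift c σ) (lift (c+1) τ)
| .rarr σ τ => .rarr (lift c σ) (lift c τ)
| .inter σ τ => .inter (lift c σ) (lift c τ)
| .union σ τ => .union (lift c σ) (lift c τ)
| .const k => .const k
| .var n => if n < c then .var n else .var (n+1)
| .lam σ Δ => .lam (lift c σ) (lift (c+1) Δ)
| .app Δ₁ Δ₂ => .app (lift c Δ₁) (lift c Δ₂)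
| .rlam σ Δ => .rlam (lift c σ) (lift (c+1) Δ)
| .rapp Δ₁ Δ₂ => .rapp (lift c Δ₁) (lift c Δ₂)
| .pair Δ₁ Δ₂ => .pair (lift c Δ₁) (lift c Δ₂)
| .copair Δ₁ Δ₂ => .copair (lift c Δ₁) (lift c Δ₂)
| .prl Δ => .prl (lift c Δ)
| .prr Δ => .prr (lift c Δ)
| .inl σ Δ => .inl (lift c σ) (lift c Δ)
| .inr σ Δ => .inr (lift c σ) (lift c Δ)

/-- Substitute the object N for variable k. -/
def subst (k : ℕ) (N : Tm) : Tm → Tm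
| .type => .type
| .pi σ τ => .pi (subst k N σ) (subst (k+1) N τ)
| .rarr σ τ => .rarr (subst k N σ) (subst k N τ)
| .inter σ τ => .inter (subst k N σ) (subst k N τ)
| .union σ τ => .union (subst k N σ) (subst k N τ)
| .const c => .const c
| .var n => if n < k then .var n else if n = k then (lift 0)^[k] N else .var (n-1)
| .lam σ Δ => .lam (subst k N σ) (subst (k+1) N Δ)
| .app Δ₁ Δ₂ => .app (subst k N Δ₁) (subst k N Δ₂)
| .rlam σ Δ => .rlam (subst k N σ) (subst (k+1) N Δ)
| .rapp Δ₁ Δ₂ => .rapp (subst k N Δ₁) (subst k N Δ₂)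
| .pair Δ₁ Δ₂ => .pair (subst k N Δ₁) (subst k N Δ₂)
| .copair Δ₁ Δ₂ => .copair (subst k N Δ₁) (subst k N Δ₂)
| .prl Δ => .prl (subst k N Δ)
| .prr Δ => .prr (subst k N Δ)
| .inl σ Δ => .inl (subst k N σ) (subst k N Δ)
| .inr σ Δ => .inr (subst k N σ) (subst k N Δ)

end Tm

/-- The essence function: compositionally erases all type annotations and
    proof-functional constructs (on non-objects it returns a dummy value). -/
def essence : Tm → Lam
| .var n => .var n
| .const c => .const c
| .lam _ Δ => .lam (essence Δ)
| .rlam _ Δ => .lam (essence Δ)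
| .app Δ₁ Δ₂ => .app (essence Δ₁) (essence Δ₂)
| .rapp _ Δ₂ => essence Δ₂
| .pair Δ₁ _ => essence Δ₁
| .copair Δ₁ _ => essence Δ₁
| .prl Δ => essence Δ
| .prr Δ => essence Δ
| .inl _ Δ => essence Δ
| .inr _ Δ => essence Δ
| .type => .const 0
| .pi _ _ => .const 0
| .rarr _ _ => .const 0
| .inter _ _ => .const 0
| .union _ _ => .const 0

/-- One-step reduction →_Δ of LF_Δ. Congruence rules are standard, except
    that the components of strong pairs and co-pairs must reduce in parallel,
    keeping identical essences. -/
inductive Step : Tm → Tm → Prop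
| beta {σ Δ₁ Δ₂ : Tm} : Step (.app (.lam σ Δ₁) Δ₂) (Tm.subst 0 Δ₂ Δ₁)
| rbeta {σ Δ₁ Δ₂ : Tm} : Step (.rapp (.rlam σ Δ₁) Δ₂) (Tm.subst 0 Δ₂ Δ₁)
| prl {Δ₁ Δ₂ : Tm} : Step (.prl (.pair Δ₁ Δ₂)) Δ₁
| prr {Δ₁ Δ₂ : Tm} : Step (.prr (.pair Δ₁ Δ₂)) Δ₂
| coInl {Δ₁ Δ₂ σ Δ₃ : Tm} :
    Step (.app (.copair Δ₁ Δ₂) (.inl σ Δ₃)) (.app Δ₁ Δ₃)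
| coInr {Δ₁ Δ₂ σ Δ₃ : Tm} :
    Step (.app (.copair Δ₁ Δ₂) (.inr σ Δ₃)) (.app Δ₂ Δ₃)
| piL {σ σ' τ : Tm} : Step σ σ' → Step (.pi σ τ) (.pi σ' τ)
| piR {σ τ τ' : Tm} : Step τ τ' → Step (.pi σ τ) (.pi σ τ')
| rarrL {σ σ' τ : Tm} : Step σ σ' → Step (.rarr σ τ) (.rarr σ' τ)
| rarrR {σ τ τ' : Tm} : Step τ τ' → Step (.rarr σ τ) (.rarr σ τ')
| interL {σ σ' τ : Tm} : Step σ σ' → Step (.inter σ τ) (.inter σ' τ)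
| interR {σ τ τ' : Tm} : Step τ τ' → Step (.inter σ τ) (.inter σ τ')
| unionL {σ σ' τ : Tm} : Step σ σ' → Step (.union σ τ) (.union σ' τ)
| unionR {σ τ τ' : Tm} : Step τ τ' → Step (.union σ τ) (.union σ τ')
| lamL {σ σ' Δ : Tm} : Step σ σ' → Step (.lam σ Δ) (.lam σ' Δ)
| lamR {σ Δ Δ' : Tm} : Step Δ Δ' → Step (.lam σ Δ) (.lam σ Δ')
| rlamL {σ σ' Δ : Tm} : Step σ σ' → Step (.rlam σ Δ) (.rlam σ' Δ)
| rlamR {σ Δ Δ' : Tm} : Step Δ Δ' → Step (.rlam σ Δ) (.rlam σ Δ')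
| appL {Δ₁ Δ₁' Δ₂ : Tm} : Step Δ₁ Δ₁' → Step (.app Δ₁ Δ₂) (.app Δ₁' Δ₂)
| appR {Δ₁ Δ₂ Δ₂' : Tm} : Step Δ₂ Δ₂' → Step (.app Δ₁ Δ₂) (.app Δ₁ Δ₂')
| rappL {Δ₁ Δ₁' Δ₂ : Tm} : Step Δ₁ Δ₁' → Step (.rapp Δ₁ Δ₂) (.rapp Δ₁' Δ₂)
| rappR {Δ₁ Δ₂ Δ₂' : Tm} : Step Δ₂ Δ₂' → Step (.rapp Δ₁ Δ₂) (.rapp Δ₁ Δ₂')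
| prlC {Δ Δ' : Tm} : Step Δ Δ' → Step (.prl Δ) (.prl Δ')
| prrC {Δ Δ' : Tm} : Step Δ Δ' → Step (.prr Δ) (.prr Δ')
| inlL {σ σ' Δ : Tm} : Step σ σ' → Step (.inl σ Δ) (.inl σ' Δ)
| inlR {σ Δ Δ' : Tm} : Step Δ Δ' → Step (.inl σ Δ) (.inl σ Δ')
| inrL {σ σ' Δ : Tm} : Step σ σ' → Step (.inr σ Δ) (.inr σ' Δ)
| inrR {σ Δ Δ' : Tm} : Step Δ Δ' → Step (.inr σ Δ) (.inr σ Δ')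
| pairC {Δ₁ Δ₁' Δ₂ Δ₂' : Tm} :
    Step Δ₁ Δ₁' → Step Δ₂ Δ₂' → essence Δ₁' = essence Δ₂' →
    Step (.pair Δ₁ Δ₂) (.pair Δ₁' Δ₂')
| copairC {Δ₁ Δ₁' Δ₂ Δ₂' : Tm} :
    Step Δ₁ Δ₁' → Step Δ₂ Δ₂' → essence Δ₁' = essence Δ₂' →
    Step (.copair Δ₁ Δ₂) (.copair Δ₁' Δ₂')

/-- Definitional equality =_Δ : the symmetric reflexive transitive closure
    of →_Δ. -/
def DefEq : Tm → Tm → Prop := Conv Step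

/-- Strong normalization w.r.t. →_Δ. -/
def SNTm (t : Tm) : Prop := Acc (fun a b => Step b a) t

/-- Signature entries: kind declarations a:K and type declarations c:σ. -/
inductive SigEntry : Type
| kd (a : ℕ) (K : Tm)
| ty (c : ℕ) (σ : Tm)
deriving DecidableEq

abbrev Sig := List SigEntry
abbrev Ctx := List Tm

/-- c is declared in the signature. -/
def inDom (S : Sig) (c : ℕ) : Prop :=
  (∃ K, SigEntry.kd c K ∈ S) ∨ (∃ σ, SigEntry.ty c σ ∈ S)

/-- Context lookup, with the appropriate lifting. -/
inductive VarTy : Ctx → ℕ → Tm → Prop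
| zero {Γ : Ctx} {σ : Tm} : VarTy (σ :: Γ) 0 (Tm.lift 0 σ)
| succ {Γ : Ctx} {n : ℕ} {σ τ : Tm} :
    VarTy Γ n σ → VarTy (τ :: Γ) (n+1) (Tm.lift 0 σ)

mutual
/-- Σ is a valid signature. -/
inductive SigOk : Sig → Prop
| nil : SigOk []
| kd {S : Sig} {a : ℕ} {K : Tm} :
    SigOk S → KindOk S [] K → ¬ inDom S a → SigOk (.kd a K :: S)
| ty {S : Sig} {c : ℕ} {σ : Tm} :
    SigOk S → FamTy S [] σ .type → ¬ inDom S c → SigOk (.ty c σ :: S)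

/-- Γ is a valid context in Σ. -/
inductive CtxOk : Sig → Ctx → Prop
| nil {S : Sig} : SigOk S → CtxOk S []
| cons {S : Sig} {Γ : Ctx} {σ : Tm} :
    CtxOk S Γ → FamTy S Γ σ .type → CtxOk S (σ :: Γ)

/-- K is a kind in Γ and Σ. -/
inductive KindOk : Sig → Ctx → Tm → Prop
| type {S : Sig} {Γ : Ctx} : CtxOk S Γ → KindOk S Γ .type
| pi {S : Sig} {Γ : Ctx} {σ K : Tm} :
    FamTy S Γ σ .type → KindOk S (σ :: Γ) K → KindOk S Γ (.pi σ K)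

/-- σ has kind K in Γ and Σ. -/
inductive FamTy : Sig → Ctx → Tm → Tm → Prop
| const {S : Sig} {Γ : Ctx} {a : ℕ} {K : Tm} :
    CtxOk S Γ → SigEntry.kd a K ∈ S → FamTy S Γ (.const a) K
| pi {S : Sig} {Γ : Ctx} {σ τ : Tm} :
    FamTy S Γ σ .type → FamTy S (σ :: Γ) τ .type → FamTy S Γ (.pi σ τ) .type
| app {S : Sig} {Γ : Ctx} {σ τ K Δ : Tm} :
    FamTy S Γ σ (.pi τ K) → ObjTy S Γ Δ τ →
    FamTy S Γ (.app σ Δ) (Tm.subst 0 Δ K)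
| rarr {S : Sig} {Γ : Ctx} {σ τ : Tm} :
    FamTy S Γ σ .type → FamTy S Γ τ .type → FamTy S Γ (.rarr σ τ) .type
| inter {S : Sig} {Γ : Ctx} {σ τ : Tm} :
    FamTy S Γ σ .type → FamTy S Γ τ .type → FamTy S Γ (.inter σ τ) .type
| union {S : Sig} {Γ : Ctx} {σ τ : Tm} :
    FamTy S Γ σ .type → FamTy S Γ τ .type → FamTy S Γ (.union σ τ) .type
| conv {S : Sig} {Γ : Ctx} {σ K₁ K₂ : Tm} :
    FamTy S Γ σ K₁ → KindOk S Γ K₂ → DefEq K₁ K₂ → FamTy S Γ σ K₂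

/-- Δ has type σ in Γ and Σ. -/
inductive ObjTy : Sig → Ctx → Tm → Tm → Prop
| const {S : Sig} {Γ : Ctx} {c : ℕ} {σ : Tm} :
    CtxOk S Γ → SigEntry.ty c σ ∈ S → ObjTy S Γ (.const c) σ
| var {S : Sig} {Γ : Ctx} {n : ℕ} {σ : Tm} :
    CtxOk S Γ → VarTy Γ n σ → ObjTy S Γ (.var n) σ
| lam {S : Sig} {Γ : Ctx} {σ τ Δ : Tm} :
    ObjTy S (σ :: Γ) Δ τ → ObjTy S Γ (.lam σ Δ) (.pi σ τ)
| app {S : Sig} {Γ : Ctx} {σ τ Δ₁ Δ₂ : Tm} :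
    ObjTy S Γ Δ₁ (.pi σ τ) → ObjTy S Γ Δ₂ σ →
    ObjTy S Γ (.app Δ₁ Δ₂) (Tm.subst 0 Δ₂ τ)
| rlam {S : Sig} {Γ : Ctx} {σ τ Δ : Tm} :
    ObjTy S (σ :: Γ) Δ (Tm.lift 0 τ) →
    Lam.BetaEtaEq (essence Δ) (.var 0) →
    ObjTy S Γ (.rlam σ Δ) (.rarr σ τ)
| rapp {S : Sig} {Γ : Ctx} {σ τ Δ₁ Δ₂ : Tm} :
    ObjTy S Γ Δ₁ (.rarr σ τ) → ObjTy S Γ Δ₂ σ → ObjTy S Γ (.rapp Δ₁ Δ₂) τ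
| pair {S : Sig} {Γ : Ctx} {σ τ Δ₁ Δ₂ : Tm} :
    ObjTy S Γ Δ₁ σ → ObjTy S Γ Δ₂ τ →
    Lam.BetaEtaEq (essence Δ₁) (essence Δ₂) →
    ObjTy S Γ (.pair Δ₁ Δ₂) (.inter σ τ)
| prl {S : Sig} {Γ : Ctx} {σ τ Δ : Tm} :
    ObjTy S Γ Δ (.inter σ τ) → ObjTy S Γ (.prl Δ) σ
| prr {S : Sig} {Γ : Ctx} {σ τ Δ : Tm} :
    ObjTy S Γ Δ (.inter σ τ) → ObjTy S Γ (.prr Δ) τ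
| inl {S : Sig} {Γ : Ctx} {σ τ Δ : Tm} :
    ObjTy S Γ Δ σ → FamTy S Γ (.union σ τ) .type →
    ObjTy S Γ (.inl τ Δ) (.union σ τ)
| inr {S : Sig} {Γ : Ctx} {σ τ Δ : Tm} :
    ObjTy S Γ Δ τ → FamTy S Γ (.union σ τ) .type →
    ObjTy S Γ (.inr σ Δ) (.union σ τ)
| copair {S : Sig} {Γ : Ctx} {σ τ ρ Δ₁ Δ₂ : Tm} :
    ObjTy S Γ Δ₁
      (.pi σ (Tm.subst 0 (.inl (Tm.lift 0 τ) (.var 0)) (Tm.lift 1 ρ))) →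
    ObjTy S Γ Δ₂
      (.pi τ (Tm.subst 0 (.inr (Tm.lift 0 σ) (.var 0)) (Tm.lift 1 ρ))) →
    FamTy S (.union σ τ :: Γ) ρ .type →
    Lam.BetaEtaEq (essence Δ₁) (essence Δ₂) →
    ObjTy S Γ (.copair Δ₁ Δ₂) (.pi (.union σ τ) ρ)
| conv {S : Sig} {Γ : Ctx} {σ τ Δ : Tm} :
    ObjTy S Γ Δ σ → FamTy S Γ τ .type → DefEq σ τ → ObjTy S Γ Δ τ
end

/-- The dependency-erasing translation |·| on families and kinds. -/
def eraseTy : Tm → BTy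
| .type => .top
| .pi σ τ => .arr (eraseTy σ) (eraseTy τ)
| .rarr σ τ => .arr (eraseTy σ) (eraseTy τ)
| .inter σ τ => .inter (eraseTy σ) (eraseTy τ)
| .union σ τ => .union (eraseTy σ) (eraseTy τ)
| .const a => .atom a
| .app σ _ => eraseTy σ
| _ => .top

/-- The forgetful translation ‖·‖ of LF_Δ objects and families into pure
    λ-terms with constants, flattening type annotations into redexes. -/
def tr : Tm → Lam
| .type => .const 0
| .pi σ τ => .app (.app (.cty (eraseTy σ)) (tr σ)) (.lam (tr τ))
| .rarr σ τ => .app (.app .cx (tr σ)) (tr τ)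
| .inter σ τ => .app (.app .cx (tr σ)) (tr τ)
| .union σ τ => .app (.app .cx (tr σ)) (tr τ)
| .const c => .const c
| .var n => .var n
| .lam σ Δ => .app (.lam (.lam (Lam.lift 1 (tr Δ)))) (tr σ)
| .rlam σ Δ => .app (.lam (.lam (Lam.lift 1 (tr Δ)))) (tr σ)
| .app Δ₁ Δ₂ => .app (tr Δ₁) (tr Δ₂)
| .rapp Δ₁ Δ₂ => .app (tr Δ₁) (tr Δ₂)
| .pair Δ₁ _ => tr Δ₁
| .copair Δ₁ _ => tr Δ₁
| .prl Δ => tr Δ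
| .prr Δ => tr Δ
| .inl σ Δ => .app (.lam (Lam.lift 0 (tr Δ))) (tr σ)
| .inr σ Δ => .app (.lam (Lam.lift 0 (tr Δ))) (tr σ)

/-- Constant typing axioms of B⁺ induced by a signature. -/
def sigXi (S : Sig) : ℕ → BTy → Prop :=
  fun c τ => (∃ σ, SigEntry.ty c σ ∈ S ∧ τ = eraseTy σ) ∨
             (∃ K, SigEntry.kd c K ∈ S ∧ τ = eraseTy K)

/-- Embedding of (non-dependent, relevance-free) B types as LF_Δ families. -/
def toFam : BTy → Tm
| .atom a => .const a
| .top => .const 0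
| .arr σ τ => .pi (toFam σ) (Tm.lift 0 (toFam τ))
| .inter σ τ => .inter (toFam σ) (toFam τ)
| .union σ τ => .union (toFam σ) (toFam τ)

/-!
Conversion `=_Δ` is contained in the equivalence closure of a parallel reduction `⇛` which, unlike
`→_Δ`, puts no essence side condition on pairs and co-pairs. Every `⇛`-reduct of a term reduces in
one more step to its complete development, so `⇛` is confluent and convertible terms have a common
`⇛*`-reduct. A `⇛*`-reduct of `Π x:σ.τ` is some `Π x:σ₀.τ₀` with `σ ⇛* σ₀` and `τ ⇛* τ₀` (likewise
for `→ʳ`, `∩`, `∪`), and `⇛ ⊆ =_Δ`. Finally, a family of kind `Type` is either a constant applied to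
objects, a shape that `⇛` preserves, or headed by one of the four binary formers, so the common
reduct forces `ρ` to have the same head as `Π x:σ.τ`.
-/

namespace Conv

theorem map {α β : Type} {r : α → α → Prop} {s : β → β → Prop} (f : α → β)
    (hf : ∀ a b, r a b → Conv s (f a) (f b)) {a b : α} (h : Conv r a b) :
    Conv s (f a) (f b) := by
  induction h with
  | rel h => exact hf _ _ h
  | refl a => exact .refl _
  | symm _ ih => exact ih.symm
  | trans _ _ ih₁ ih₂ => exact ih₁.trans ih₂

end Conv

namespace Tm

theorem lift_lift_of_le (t : Tm) {c d : ℕ} (h : c ≤ d) :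
    lift c (lift d t) = lift (d + 1) (lift c t) := by
  induction t generalizing c d <;> simp only [lift]
  case var n =>
    split_ifs <;> simp only [lift] <;> split_ifs <;>
      first | rfl | exact congrArg Tm.var (by omega)
  all_goals congr 1 <;> solve_by_elim [Nat.succ_le_succ]

theorem lift_iterate_lift_zero_of_le (N : Tm) {k c : ℕ} (h : c ≤ k) :
    lift c ((lift 0)^[k] N) = (lift 0)^[k + 1] N := by
  induction k generalizing c with
  | zero =>
    obtain rfl : c = 0 := by omega
    simp
  | succ k ih =>
    rcases c with _ | c
    · rw [← Function.iterate_succ_apply' (lift 0) (k + 1) N]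
    · rw [Function.iterate_succ_apply' (lift 0) k N, ← lift_lift_of_le _ (Nat.zero_le c),
        ih (by omega), Function.iterate_succ_apply' (lift 0) (k + 1) N]

theorem lift_add_iterate_lift_zero (N : Tm) (k c : ℕ) :
    lift (k + c) ((lift 0)^[k] N) = (lift 0)^[k] (lift c N) := by
  induction k with
  | zero => simp
  | succ k ih =>
    rw [Function.iterate_succ_apply' (lift 0) k N, Function.iterate_succ_apply' (lift 0) k (lift c N),
      ← ih, show k + 1 + c = k + c + 1 by omega, ← lift_lift_of_le _ (Nat.zero_le _)]

theorem subst_lift (P t : Tm) (c : ℕ) : subst c P (lift c t) = t := by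
  induction t generalizing c <;> simp only [lift, subst]
  case var n =>
    split_ifs <;> simp only [subst] <;> split_ifs <;>
      first | rfl | (exact congrArg Tm.var (by omega)) | (exfalso; omega)
  all_goals congr 1 <;> solve_by_elim

theorem lift_subst_of_le (N t : Tm) {c k : ℕ} (h : c ≤ k) :
    lift c (subst k N t) = subst (k + 1) N (lift c t) := by
  induction t generalizing c k <;> simp only [lift, subst]
  case var n =>
    split_ifs <;> simp only [subst, lift] <;> split_ifs <;>
      first
        | rfl
        | (exact congrArg Tm.var (by omega))
        | (exfalso; omega)
        | (exact lift_iterate_lift_zero_of_le N h)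
  all_goals congr 1 <;> solve_by_elim [Nat.succ_le_succ]

theorem lift_add_subst (N t : Tm) (k c : ℕ) :
    lift (k + c) (subst k N t) = subst k (lift c N) (lift (k + c + 1) t) := by
  induction t generalizing k <;> simp only [lift, subst]
  case var n =>
    split_ifs <;> simp only [subst, lift] <;> split_ifs <;>
      first
        | rfl
        | (exact congrArg Tm.var (by omega))
        | (exfalso; omega)
        | (exact lift_add_iterate_lift_zero N k c)
  all_goals try { congr 1 <;> solve_by_elim }
  all_goals
    rename_i iha ihb
    congr 1
    · exact iha k
    · simpa only [show k + 1 + c = k + c + 1 by omega] using ihb (k + 1)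

theorem subst_add_iterate_lift_zero (N M : Tm) (j k : ℕ) :
    subst (k + j) N ((lift 0)^[j] M) = (lift 0)^[j] (subst k N M) := by
  induction j with
  | zero => simp
  | succ j ih =>
    rw [Function.iterate_succ_apply' (lift 0) j M, Function.iterate_succ_apply' (lift 0) j (subst k N M),
      ← ih, show k + (j + 1) = k + j + 1 by omega, ← lift_subst_of_le N _ (Nat.zero_le _)]

theorem subst_iterate_lift_zero_of_le (P N : Tm) {j i : ℕ} (h : j ≤ i) :
    subst j P ((lift 0)^[i + 1] N) = (lift 0)^[i] N := by
  induction j generalizing i with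
  | zero => rw [Function.iterate_succ_apply' (lift 0) i N, subst_lift]
  | succ j ih =>
    obtain ⟨i, rfl⟩ : ∃ i', i = i' + 1 := ⟨i - 1, by omega⟩
    rw [Function.iterate_succ_apply' (lift 0) (i + 1) N, ← lift_subst_of_le P _ (Nat.zero_le j),
      ih (by omega), ← Function.iterate_succ_apply' (lift 0) i N]

theorem subst_subst (N M t : Tm) (j k : ℕ) :
    subst (k + j) N (subst j M t) = subst j (subst k N M) (subst (k + j + 1) N t) := by
  induction t generalizing j <;> simp only [subst]
  case var n =>
    split_ifs <;> (try simp only [subst]) <;> (try split_ifs) <;>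
      first
        | rfl
        | (exact congrArg Tm.var (by omega))
        | (exfalso; omega)
        | (exact subst_add_iterate_lift_zero N M j k)
        | (exact (subst_iterate_lift_zero_of_le _ N (by omega : j ≤ k + j)).symm)
  all_goals try { congr 1 <;> solve_by_elim }
  all_goals
    rename_i iha ihb
    congr 1
    · exact iha j
    · simpa only [show k + (j + 1) = k + j + 1 by omega] using ihb (j + 1)

theorem lift_subst_zero (t N : Tm) (c : ℕ) :
    lift c (subst 0 N t) = subst 0 (lift c N) (lift (c + 1) t) := by
  simpa using lift_add_subst N t 0 c

theorem subst_subst_zero (t M N : Tm) (k : ℕ) :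
    subst k N (subst 0 M t) = subst 0 (subst k N M) (subst (k + 1) N t) := by
  simpa using subst_subst N M t 0 k

end Tm

/-- Parallel reduction `⇛`: `→_Δ` without the essence side conditions on pairs and co-pairs. -/
inductive Par : Tm → Tm → Prop
| type : Par .type .type
| const (c : ℕ) : Par (.const c) (.const c)
| var (n : ℕ) : Par (.var n) (.var n)
| pi {a a' b b' : Tm} : Par a a' → Par b b' → Par (.pi a b) (.pi a' b')
| rarr {a a' b b' : Tm} : Par a a' → Par b b' → Par (.rarr a b) (.rarr a' b')
| inter {a a' b b' : Tm} : Par a a' → Par b b' → Par (.inter a b) (.inter a' b')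
| union {a a' b b' : Tm} : Par a a' → Par b b' → Par (.union a b) (.union a' b')
| lam {a a' b b' : Tm} : Par a a' → Par b b' → Par (.lam a b) (.lam a' b')
| rlam {a a' b b' : Tm} : Par a a' → Par b b' → Par (.rlam a b) (.rlam a' b')
| app {a a' b b' : Tm} : Par a a' → Par b b' → Par (.app a b) (.app a' b')
| rapp {a a' b b' : Tm} : Par a a' → Par b b' → Par (.rapp a b) (.rapp a' b')
| pair {a a' b b' : Tm} : Par a a' → Par b b' → Par (.pair a b) (.pair a' b')
| copair {a a' b b' : Tm} : Par a a' → Par b b' → Par (.copair a b) (.copair a' b')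
| prl {a a' : Tm} : Par a a' → Par (.prl a) (.prl a')
| prr {a a' : Tm} : Par a a' → Par (.prr a) (.prr a')
| inl {a a' b b' : Tm} : Par a a' → Par b b' → Par (.inl a b) (.inl a' b')
| inr {a a' b b' : Tm} : Par a a' → Par b b' → Par (.inr a b) (.inr a' b')
| beta {σ M M' N N' : Tm} : Par M M' → Par N N' → Par (.app (.lam σ M) N) (Tm.subst 0 N' M')
| rbeta {σ M M' N N' : Tm} : Par M M' → Par N N' → Par (.rapp (.rlam σ M) N) (Tm.subst 0 N' M')
| prlPair {a a' b : Tm} : Par a a' → Par (.prl (.pair a b)) a'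
| prrPair {a b b' : Tm} : Par b b' → Par (.prr (.pair a b)) b'
| coInl {a a' b σ c c' : Tm} : Par a a' → Par c c' →
    Par (.app (.copair a b) (.inl σ c)) (.app a' c')
| coInr {a b b' σ c c' : Tm} : Par b b' → Par c c' →
    Par (.app (.copair a b) (.inr σ c)) (.app b' c')

namespace Par

theorem refl (t : Tm) : Par t t := by
  induction t <;> constructor <;> assumption

theorem lift {a b : Tm} (h : Par a b) (c : ℕ) : Par (Tm.lift c a) (Tm.lift c b) := by
  induction h generalizing c <;> simp only [Tm.lift, Tm.lift_subst_zero] <;>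
    first
      | (split_ifs <;> constructor)
      | constructor <;> solve_by_elim
      | exact coInl (by solve_by_elim) (by solve_by_elim)
      | exact coInr (by solve_by_elim) (by solve_by_elim)

theorem iterate_lift {a b : Tm} (h : Par a b) (k : ℕ) :
    Par ((Tm.lift 0)^[k] a) ((Tm.lift 0)^[k] b) := by
  induction k with
  | zero => exact h
  | succ k ih =>
    rw [Function.iterate_succ_apply' (Tm.lift 0) k a, Function.iterate_succ_apply' (Tm.lift 0) k b]
    exact ih.lift 0

theorem subst {M M' N N' : Tm} (hM : Par M M') (hN : Par N N') (k : ℕ) :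
    Par (Tm.subst k N M) (Tm.subst k N' M') := by
  induction hM generalizing k <;> simp only [Tm.subst, Tm.subst_subst_zero]
  case var n =>
    split_ifs
    · exact refl _
    · exact hN.iterate_lift k
    · exact refl _
  all_goals first
    | constructor <;> solve_by_elim
    | exact coInl (by solve_by_elim) (by solve_by_elim)
    | exact coInr (by solve_by_elim) (by solve_by_elim)

end Par

/-- Complete development: contract every redex of the term simultaneously. -/
def cd : Tm → Tm
| .type => .type
| .pi a b => .pi (cd a) (cd b)
| .rarr a b => .rarr (cd a) (cd b)
| .inter a b => .inter (cd a) (cd b)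
| .union a b => .union (cd a) (cd b)
| .const c => .const c
| .var n => .var n
| .lam a b => .lam (cd a) (cd b)
| .app (.lam _ M) N => Tm.subst 0 (cd N) (cd M)
| .app (.copair a _) (.inl _ c) => .app (cd a) (cd c)
| .app (.copair _ b) (.inr _ c) => .app (cd b) (cd c)
| .app a b => .app (cd a) (cd b)
| .rlam a b => .rlam (cd a) (cd b)
| .rapp (.rlam _ M) N => Tm.subst 0 (cd N) (cd M)
| .rapp a b => .rapp (cd a) (cd b)
| .pair a b => .pair (cd a) (cd b)
| .copair a b => .copair (cd a) (cd b)
| .prl (.pair a _) => cd a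
| .prl a => .prl (cd a)
| .prr (.pair _ b) => cd b
| .prr a => .prr (cd a)
| .inl a b => .inl (cd a) (cd b)
| .inr a b => .inr (cd a) (cd b)

namespace Par

theorem app_cd {t₁ u₁ t₂ u₂ : Tm} (h₁ : Par t₁ u₁) (ih₁ : Par u₁ (cd t₁))
    (h₂ : Par t₂ u₂) (ih₂ : Par u₂ (cd t₂)) : Par (.app u₁ u₂) (cd (.app t₁ t₂)) := by
  cases t₁ <;> try exact app ih₁ ih₂
  case lam σ M =>
    cases h₁ with | lam _ _ => cases ih₁ with | lam _ hM => exact beta hM ih₂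
  case copair a b =>
    cases t₂ <;> try exact app ih₁ ih₂
    case inl σ c =>
      cases h₁ with | copair _ _ => cases ih₁ with | copair ha _ =>
      cases h₂ with | inl _ _ => cases ih₂ with | inl _ hc => exact coInl ha hc
    case inr σ c =>
      cases h₁ with | copair _ _ => cases ih₁ with | copair _ hb =>
      cases h₂ with | inr _ _ => cases ih₂ with | inr _ hc => exact coInr hb hc

theorem triangle {t u : Tm} (h : Par t u) : Par u (cd t) := by
  induction h with
  | type => exact type
  | const c => exact const c
  | var n => exact var n
  | pi _ _ ih₁ ih₂ => exact pi ih₁ ih₂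
  | rarr _ _ ih₁ ih₂ => exact rarr ih₁ ih₂
  | inter _ _ ih₁ ih₂ => exact inter ih₁ ih₂
  | union _ _ ih₁ ih₂ => exact union ih₁ ih₂
  | lam _ _ ih₁ ih₂ => exact lam ih₁ ih₂
  | rlam _ _ ih₁ ih₂ => exact rlam ih₁ ih₂
  | pair _ _ ih₁ ih₂ => exact pair ih₁ ih₂
  | copair _ _ ih₁ ih₂ => exact copair ih₁ ih₂
  | inl _ _ ih₁ ih₂ => exact inl ih₁ ih₂
  | inr _ _ ih₁ ih₂ => exact inr ih₁ ih₂
  | beta _ _ ihM ihN => exact ihM.subst ihN 0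
  | rbeta _ _ ihM ihN => exact ihM.subst ihN 0
  | prlPair _ ih => exact ih
  | prrPair _ ih => exact ih
  | coInl _ _ ih₁ ih₂ => exact app ih₁ ih₂
  | coInr _ _ ih₁ ih₂ => exact app ih₁ ih₂
  | app h₁ h₂ ih₁ ih₂ => exact app_cd h₁ ih₁ h₂ ih₂
  | @rapp t₁ u₁ _ _ h₁ _ ih₁ ih₂ =>
    cases t₁ <;> try exact rapp ih₁ ih₂
    cases h₁ with | rlam _ _ => cases ih₁ with | rlam _ hM => exact rbeta hM ih₂
  | @prl t _ h ih =>
    cases t <;> try exact prl ih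
    cases h with | pair _ _ => cases ih with | pair ha _ => exact prlPair ha
  | @prr t _ h ih =>
    cases t <;> try exact prr ih
    cases h with | pair _ _ => cases ih with | pair _ hb => exact prrPair hb

end Par

abbrev ParStar : Tm → Tm → Prop := Relation.ReflTransGen Par

theorem Par.join_of_conv {a b : Tm} (h : Conv Par a b) : Relation.Join ParStar a b := by
  have hjoin : Equivalence (Relation.Join ParStar) :=
    Relation.equivalence_join_reflTransGen fun _ _ _ hb hc =>
      ⟨_, .single hb.triangle, .single hc.triangle⟩
  induction h with
  | rel h => exact ⟨_, .single h, .refl⟩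
  | refl a => exact hjoin.refl a
  | symm _ ih => exact hjoin.symm ih
  | trans _ _ ih₁ ih₂ => exact hjoin.trans ih₁ ih₂

theorem Step.par {a b : Tm} (h : Step a b) : Par a b := by
  induction h <;>
    first
      | exact .beta (.refl _) (.refl _)
      | exact .rbeta (.refl _) (.refl _)
      | exact .prlPair (.refl _)
      | exact .prrPair (.refl _)
      | exact .coInl (.refl _) (.refl _)
      | exact .coInr (.refl _) (.refl _)
      | constructor <;> first | assumption | exact .refl _

theorem DefEq.join {a b : Tm} (h : DefEq a b) : Relation.Join ParStar a b :=
  Par.join_of_conv (Conv.map id (fun _ _ h => .rel h.par) h)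

theorem DefEq.subst_zero (t : Tm) {a a' : Tm} (h : DefEq a a') :
    DefEq (Tm.subst 0 a t) (Tm.subst 0 a' t) :=
  (Conv.rel Step.beta).symm.trans
    ((Conv.map (Tm.app (.lam .type t)) (fun _ _ h => .rel (.appR h)) h).trans (.rel .beta))

theorem DefEq.congr₂ {f : Tm → Tm → Tm}
    (hl : ∀ {a a' b}, Step a a' → DefEq (f a b) (f a' b))
    (hr : ∀ {a b b'}, Step b b' → DefEq (f a b) (f a b'))
    {a a' b b' : Tm} (ha : DefEq a a') (hb : DefEq b b') : DefEq (f a b) (f a' b') :=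
  (Conv.map (f · b) (fun _ _ h => hl h) ha).trans (Conv.map (f a') (fun _ _ h => hr h) hb)

/-- Congruence through the β-expansion `f a b =_Δ (λx:Type. f x b) a`. This is what handles pairs
and co-pairs, whose `→_Δ` congruence rules make both components step together. -/
theorem DefEq.congr₂_of_subst {f : Tm → Tm → Tm}
    (hf : ∀ x y z, Tm.subst 0 x (f y z) = f (Tm.subst 0 x y) (Tm.subst 0 x z))
    {a a' b b' : Tm} (ha : DefEq a a') (hb : DefEq b b') : DefEq (f a b) (f a' b') := by
  have hl := DefEq.subst_zero (f (.var 0) (Tm.lift 0 b)) ha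
  have hr := DefEq.subst_zero (f (Tm.lift 0 a') (.var 0)) hb
  simp only [hf, Tm.subst_lift, Tm.subst, lt_self_iff_false, if_false, if_true,
    Function.iterate_zero, id] at hl hr
  exact hl.trans hr

theorem DefEq.pi {a a' b b' : Tm} (ha : DefEq a a') (hb : DefEq b b') :
    DefEq (.pi a b) (.pi a' b') :=
  .congr₂ (f := .pi) (fun h => .rel (.piL h)) (fun h => .rel (.piR h)) ha hb

theorem DefEq.lam {a a' b b' : Tm} (ha : DefEq a a') (hb : DefEq b b') :
    DefEq (.lam a b) (.lam a' b') :=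
  .congr₂ (f := .lam) (fun h => .rel (.lamL h)) (fun h => .rel (.lamR h)) ha hb

theorem DefEq.rlam {a a' b b' : Tm} (ha : DefEq a a') (hb : DefEq b b') :
    DefEq (.rlam a b) (.rlam a' b') :=
  .congr₂ (f := .rlam) (fun h => .rel (.rlamL h)) (fun h => .rel (.rlamR h)) ha hb

theorem Par.defEq {a b : Tm} (h : Par a b) : DefEq a b := by
  induction h with
  | type | const | var => exact .refl _
  | pi _ _ ih₁ ih₂ => exact .pi ih₁ ih₂
  | lam _ _ ih₁ ih₂ => exact .lam ih₁ ih₂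
  | rlam _ _ ih₁ ih₂ => exact .rlam ih₁ ih₂
  | rarr _ _ ih₁ ih₂ | inter _ _ ih₁ ih₂ | union _ _ ih₁ ih₂ | app _ _ ih₁ ih₂ | rapp _ _ ih₁ ih₂
  | pair _ _ ih₁ ih₂ | copair _ _ ih₁ ih₂ | inl _ _ ih₁ ih₂ | inr _ _ ih₁ ih₂ =>
    exact .congr₂_of_subst (fun _ _ _ => rfl) ih₁ ih₂
  | prl _ ih => exact Conv.map Tm.prl (fun _ _ h => .rel (.prlC h)) ih
  | prr _ ih => exact Conv.map Tm.prr (fun _ _ h => .rel (.prrC h)) ih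
  | beta _ _ ihM ihN =>
    exact (DefEq.congr₂_of_subst (f := .app) (fun _ _ _ => rfl) (.lam (.refl _) ihM) ihN).trans
      (.rel .beta)
  | rbeta _ _ ihM ihN =>
    exact (DefEq.congr₂_of_subst (f := .rapp) (fun _ _ _ => rfl) (.rlam (.refl _) ihM) ihN).trans
      (.rel .rbeta)
  | prlPair _ ih => exact (Conv.rel .prl).trans ih
  | prrPair _ ih => exact (Conv.rel .prr).trans ih
  | coInl _ _ ih₁ ih₂ | coInr _ _ ih₁ ih₂ =>
    exact (Conv.rel (by constructor)).trans
      (DefEq.congr₂_of_subst (f := .app) (fun _ _ _ => rfl) ih₁ ih₂)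

theorem ParStar.defEq {a b : Tm} (h : ParStar a b) : DefEq a b := by
  induction h with
  | refl => exact .refl _
  | tail _ hbc ih => exact ih.trans hbc.defEq

inductive Former
| pi | rarr | inter | union

namespace Former

def apply : Former → Tm → Tm → Tm
| .pi => .pi
| .rarr => .rarr
| .inter => .inter
| .union => .union

theorem apply_inj {k k' : Former} {a a' b b' : Tm} (h : k.apply a b = k'.apply a' b') :
    k = k' ∧ a = a' ∧ b = b' := by
  cases k <;> cases k' <;> simp_all [apply]

theorem par_apply_inv {k : Former} {a b u : Tm} (h : Par (k.apply a b) u) :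
    ∃ a' b', u = k.apply a' b' ∧ Par a a' ∧ Par b b' := by
  cases k <;> cases h <;> exact ⟨_, _, rfl, ‹_›, ‹_›⟩

theorem parStar_apply_inv {k : Former} {a b u : Tm} (h : ParStar (k.apply a b) u) :
    ∃ a' b', u = k.apply a' b' ∧ ParStar a a' ∧ ParStar b b' := by
  induction h with
  | refl => exact ⟨a, b, rfl, .refl, .refl⟩
  | tail _ huv ih =>
    obtain ⟨a', b', rfl, ha, hb⟩ := ih
    obtain ⟨a'', b'', rfl, ha', hb'⟩ := par_apply_inv huv
    exact ⟨a'', b'', rfl, ha.tail ha', hb.tail hb'⟩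

end Former

inductive Neutral : Tm → Prop
| const (c : ℕ) : Neutral (.const c)
| app {f x : Tm} : Neutral f → Neutral (.app f x)

namespace Neutral

theorem par {t u : Tm} (ht : Neutral t) (h : Par t u) : Neutral u := by
  induction ht generalizing u with
  | const c => cases h; exact const c
  | app hf ih =>
    cases h with
    | app h₁ _ => exact app (ih h₁)
    | beta | coInl | coInr => cases hf

theorem parStar {t u : Tm} (ht : Neutral t) (h : ParStar t u) : Neutral u := by
  induction h with
  | refl => exact ht
  | tail _ huv ih => exact ih.par huv

theorem not_apply (k : Former) (a b : Tm) : ¬ Neutral (k.apply a b) := by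
  cases k <;> rintro ⟨⟩

end Neutral

theorem ParStar.eq_type {u : Tm} (h : ParStar .type u) : u = .type := by
  induction h with
  | refl => rfl
  | tail _ huv ih => subst ih; cases huv; rfl

theorem not_defEq_type_pi {τ K : Tm} : ¬ DefEq .type (.pi τ K) := by
  intro h
  obtain ⟨d, htype, hpi⟩ := h.join
  obtain ⟨a, b, rfl, -, -⟩ := Former.parStar_apply_inv (k := .pi) hpi
  cases htype.eq_type

theorem FamTy.neutral_or_former {S : Sig} {Γ : Ctx} {f K : Tm} :
    FamTy S Γ f K → Neutral f ∨ (∃ k a b, f = Former.apply k a b) ∧ DefEq .type K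
  | .const _ _ => .inl (.const _)
  | .pi _ _ => .inr ⟨⟨.pi, _, _, rfl⟩, .refl _⟩
  | .rarr _ _ => .inr ⟨⟨.rarr, _, _, rfl⟩, .refl _⟩
  | .inter _ _ => .inr ⟨⟨.inter, _, _, rfl⟩, .refl _⟩
  | .union _ _ => .inr ⟨⟨.union, _, _, rfl⟩, .refl _⟩
  | .app hσ _ => match neutral_or_former hσ with
    | .inl hn => .inl hn.app
    | .inr ⟨_, hpi⟩ => absurd hpi not_defEq_type_pi
  | .conv hσ _ hK => match neutral_or_former hσ with
    | .inl hn => .inl hn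
    | .inr ⟨hk, htype⟩ => .inr ⟨hk, htype.trans hK⟩

theorem Former.eq_apply_of_defEq {S : Sig} {Γ : Ctx} (k : Former) {σ τ ρ : Tm}
    (hρ : FamTy S Γ ρ .type) (h : DefEq (k.apply σ τ) ρ) :
    ∃ σ' τ', ρ = k.apply σ' τ' ∧ DefEq σ' σ ∧ DefEq τ' τ := by
  obtain ⟨d, hd, hρd⟩ := h.join
  obtain ⟨σ₀, τ₀, rfl, hσ, hτ⟩ := parStar_apply_inv hd
  rcases hρ.neutral_or_former with hn | ⟨⟨k', σ', τ', rfl⟩, -⟩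
  · exact absurd (hn.parStar hρd) (Neutral.not_apply k σ₀ τ₀)
  · obtain ⟨σ₁, τ₁, he, hσ', hτ'⟩ := parStar_apply_inv hρd
    obtain ⟨rfl, rfl, rfl⟩ := apply_inj he
    exact ⟨σ', τ', rfl, hσ'.defEq.trans hσ.defEq.symm, hτ'.defEq.trans hτ.defEq.symm⟩

/-- Conversion preserves the shape of Π-types, relevant arrows, intersections
    and unions (for well-formed families). -/
theorem lfdelta_conversion_shapes :
    ∀ (S : Sig) (Γ : Ctx),
      (∀ σ τ ρ : Tm, FamTy S Γ (.pi σ τ) .type → FamTy S Γ ρ .type →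
        DefEq (.pi σ τ) ρ →
        ∃ σ' τ', ρ = .pi σ' τ' ∧ DefEq σ' σ ∧ DefEq τ' τ) ∧
      (∀ σ τ ρ : Tm, FamTy S Γ (.rarr σ τ) .type → FamTy S Γ ρ .type →
        DefEq (.rarr σ τ) ρ →
        ∃ σ' τ', ρ = .rarr σ' τ' ∧ DefEq σ' σ ∧ DefEq τ' τ) ∧
      (∀ σ τ ρ : Tm, FamTy S Γ (.inter σ τ) .type → FamTy S Γ ρ .type →
        DefEq (.inter σ τ) ρ →
        ∃ σ' τ', ρ = .inter σ' τ' ∧ DefEq σ' σ ∧ DefEq τ' τ) ∧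
      (∀ σ τ ρ : Tm, FamTy S Γ (.union σ τ) .type → FamTy S Γ ρ .type →
        DefEq (.union σ τ) ρ →
        ∃ σ' τ', ρ = .union σ' τ' ∧ DefEq σ' σ ∧ DefEq τ' τ) :=
  fun _ _ =>
    ⟨fun _ _ _ _ hρ h => Former.pi.eq_apply_of_defEq hρ h,
      fun _ _ _ _ hρ h => Former.rarr.eq_apply_of_defEq hρ h,
      fun _ _ _ _ hρ h => Former.inter.eq_apply_of_defEq hρ h,
      fun _ _ _ _ hρ h => Former.union.eq_apply_of_defEq hρ h⟩

end LFDelta
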